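/- arXiv:2410.16265 — 2 statements merged into one kernel-verified Lean document; each statement's English description precedes it below -/
import Mathlib

section
/- For every real β, the matrix exponential of the three-qubit excitation generator satisfies exp(β P^-_{ABC}) = (1/4)(3 + cos β)·𝟙 + (1/2)sin²(β/2)·(Z_A Z_B + Z_A Z_C − Z_B Z_C) + sin(β)·P^-_{ABC}, as an identity of 8×8 complex matrices. -/
open Matrix Complex
open scoped Kronecker

noncomputable section
namespace PaperQAOA

/-- Pauli X matrix. -/
def X : Matrix (Fin 2) (Fin 2) ℂ := !![0, 1; 1, 0]
/-- Pauli Y matrix. -/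
def Y : Matrix (Fin 2) (Fin 2) ℂ := !![0, -Complex.I; Complex.I, 0]
/-- Pauli Z matrix. -/
def Z : Matrix (Fin 2) (Fin 2) ℂ := !![1, 0; 0, -1]
/-- Qubit creation operator `Q† = (X - iY)/2`. -/
def Qdag : Matrix (Fin 2) (Fin 2) ℂ := (1/2 : ℂ) • (X - Complex.I • Y)
/-- Qubit annihilation operator `Q = (X + iY)/2`. -/
def Qann : Matrix (Fin 2) (Fin 2) ℂ := (1/2 : ℂ) • (X + Complex.I • Y)

/-- Action on qubit A of a two-qubit system. -/
def A2 (M : Matrix (Fin 2) (Fin 2) ℂ) : Matrix (Fin 2 × Fin 2) (Fin 2 × Fin 2) ℂ :=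
  M ⊗ₖ (1 : Matrix (Fin 2) (Fin 2) ℂ)
/-- Action on qubit B of a two-qubit system. -/
def B2 (M : Matrix (Fin 2) (Fin 2) ℂ) : Matrix (Fin 2 × Fin 2) (Fin 2 × Fin 2) ℂ :=
  (1 : Matrix (Fin 2) (Fin 2) ℂ) ⊗ₖ M

/-- Action on qubit A of a three-qubit system. -/
def A3 (M : Matrix (Fin 2) (Fin 2) ℂ) :
    Matrix (Fin 2 × Fin 2 × Fin 2) (Fin 2 × Fin 2 × Fin 2) ℂ :=
  M ⊗ₖ (1 : Matrix (Fin 2 × Fin 2) (Fin 2 × Fin 2) ℂ)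
/-- Action on qubit B of a three-qubit system. -/
def B3 (M : Matrix (Fin 2) (Fin 2) ℂ) :
    Matrix (Fin 2 × Fin 2 × Fin 2) (Fin 2 × Fin 2 × Fin 2) ℂ :=
  (1 : Matrix (Fin 2) (Fin 2) ℂ) ⊗ₖ (M ⊗ₖ (1 : Matrix (Fin 2) (Fin 2) ℂ))
/-- Action on qubit C of a three-qubit system. -/
def C3 (M : Matrix (Fin 2) (Fin 2) ℂ) :
    Matrix (Fin 2 × Fin 2 × Fin 2) (Fin 2 × Fin 2 × Fin 2) ℂ :=
  (1 : Matrix (Fin 2) (Fin 2) ℂ) ⊗ₖ ((1 : Matrix (Fin 2) (Fin 2) ℂ) ⊗ₖ M)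

/-- Action on qubit A of a four-qubit system. -/
def A4 (M : Matrix (Fin 2) (Fin 2) ℂ) :
    Matrix (Fin 2 × Fin 2 × Fin 2 × Fin 2) (Fin 2 × Fin 2 × Fin 2 × Fin 2) ℂ :=
  M ⊗ₖ (1 : Matrix (Fin 2 × Fin 2 × Fin 2) (Fin 2 × Fin 2 × Fin 2) ℂ)
/-- Action on qubit B of a four-qubit system. -/
def B4 (M : Matrix (Fin 2) (Fin 2) ℂ) :
    Matrix (Fin 2 × Fin 2 × Fin 2 × Fin 2) (Fin 2 × Fin 2 × Fin 2 × Fin 2) ℂ :=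
  (1 : Matrix (Fin 2) (Fin 2) ℂ) ⊗ₖ (M ⊗ₖ (1 : Matrix (Fin 2 × Fin 2) (Fin 2 × Fin 2) ℂ))
/-- Action on qubit C of a four-qubit system. -/
def C4 (M : Matrix (Fin 2) (Fin 2) ℂ) :
    Matrix (Fin 2 × Fin 2 × Fin 2 × Fin 2) (Fin 2 × Fin 2 × Fin 2 × Fin 2) ℂ :=
  (1 : Matrix (Fin 2) (Fin 2) ℂ) ⊗ₖ
    ((1 : Matrix (Fin 2) (Fin 2) ℂ) ⊗ₖ (M ⊗ₖ (1 : Matrix (Fin 2) (Fin 2) ℂ)))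
/-- Action on qubit D of a four-qubit system. -/
def D4 (M : Matrix (Fin 2) (Fin 2) ℂ) :
    Matrix (Fin 2 × Fin 2 × Fin 2 × Fin 2) (Fin 2 × Fin 2 × Fin 2 × Fin 2) ℂ :=
  (1 : Matrix (Fin 2) (Fin 2) ℂ) ⊗ₖ
    ((1 : Matrix (Fin 2) (Fin 2) ℂ) ⊗ₖ ((1 : Matrix (Fin 2) (Fin 2) ℂ) ⊗ₖ M))

/-- Two-qubit excitation operator `S⁺ = Q†ₑ Q_f + Qₑ Q†_f` for qubits given by the
embeddings `e` and `f`. -/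
def Sp {m : Type} [Fintype m] (e f : Matrix (Fin 2) (Fin 2) ℂ → Matrix m m ℂ) : Matrix m m ℂ :=
  e Qdag * f Qann + e Qann * f Qdag
/-- Two-qubit excitation operator `S⁻ = Q†ₑ Q_f - Qₑ Q†_f`. -/
def Sm {m : Type} [Fintype m] (e f : Matrix (Fin 2) (Fin 2) ℂ → Matrix m m ℂ) : Matrix m m ℂ :=
  e Qdag * f Qann - e Qann * f Qdag

/-- Three-qubit excitation operator `P⁺ = Q†ₑ Q_f Q_g + Qₑ Q†_f Q†_g`. -/
def Pp {m : Type} [Fintype m] (e f g : Matrix (Fin 2) (Fin 2) ℂ → Matrix m m ℂ) : Matrix m m ℂ :=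
  e Qdag * f Qann * g Qann + e Qann * f Qdag * g Qdag
/-- Three-qubit excitation operator `P⁻ = Q†ₑ Q_f Q_g - Qₑ Q†_f Q†_g`. -/
def Pm {m : Type} [Fintype m] (e f g : Matrix (Fin 2) (Fin 2) ℂ → Matrix m m ℂ) : Matrix m m ℂ :=
  e Qdag * f Qann * g Qann - e Qann * f Qdag * g Qdag


section AuxLemmas

set_option maxHeartbeats 1000000 in
/-- If `P ^ 3 = -P` then `exp (β • P)` has Rodrigues-type closed form. -/
theorem exp_cube_neg_self {m : Type} [Fintype m] [DecidableEq m]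
    (P : Matrix m m ℂ) (h3 : P ^ 3 = -P) (β : ℝ) :
    NormedSpace.exp ((β : ℂ) • P) =
      1 + ((1 : ℂ) - Complex.cos β) • P ^ 2 + Complex.sin β • P := by
  have hodd : ∀ n : ℕ, P ^ (2 * n + 1) = ((-1 : ℂ) ^ n) • P := by
    intro n
    induction n with
    | zero => simp
    | succ n ih =>
      have h : 2 * (n + 1) + 1 = (2 * n + 1) + 2 := by ring
      rw [h, pow_add, ih, smul_mul_assoc, ← pow_succ', show (2 : ℕ) + 1 = 3 from rfl, h3]
      simp [pow_succ]
  have heven : ∀ n : ℕ, P ^ (2 * n + 2) = ((-1 : ℂ) ^ n) • P ^ 2 := by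
    intro n
    have h : 2 * n + 2 = (2 * n + 1) + 1 := by ring
    rw [h, pow_succ, hodd n, smul_mul_assoc, ← pow_two]
  rw [NormedSpace.exp_eq_tsum (𝕂 := ℂ)]
  refine HasSum.tsum_eq ?_
  have hcos1 : HasSum
      (fun n : ℕ => -((-1 : ℂ) ^ (n + 1) * (β : ℂ) ^ (2 * (n + 1)) / (Nat.factorial (2 * (n + 1)) : ℂ)))
      ((1 : ℂ) - Complex.cos β) := by
    have := (hasSum_nat_add_iff'
      (f := fun n : ℕ => (-1 : ℂ) ^ n * (β : ℂ) ^ (2 * n) / (Nat.factorial (2 * n) : ℂ)) 1).mpr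
      (Complex.hasSum_cos (β : ℂ))
    simpa using this.neg
  have hevenSum : HasSum
      (fun k : ℕ => ((Nat.factorial (2 * k) : ℂ))⁻¹ • ((β : ℂ) • P) ^ (2 * k))
      (1 + ((1 : ℂ) - Complex.cos β) • P ^ 2) := by
    refine (hasSum_nat_add_iff'
      (f := fun k : ℕ => ((Nat.factorial (2 * k) : ℂ))⁻¹ • ((β : ℂ) • P) ^ (2 * k)) 1).mp ?_
    have hc2 := hcos1.smul_const (P ^ 2)
    have hfun : (fun n : ℕ => ((Nat.factorial (2 * (n + 1)) : ℂ))⁻¹ • ((β : ℂ) • P) ^ (2 * (n + 1)))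
        = fun n : ℕ => (-((-1 : ℂ) ^ (n + 1) * (β : ℂ) ^ (2 * (n + 1)) / (Nat.factorial (2 * (n + 1)) : ℂ))) • P ^ 2 := by
      funext n
      have h : 2 * (n + 1) = 2 * n + 2 := by ring
      simp only [h, smul_pow, heven n, smul_smul]
      congr 1
      have hfac : ((Nat.factorial (2 * n + 2) : ℂ)) ≠ 0 := by
        exact_mod_cast Nat.factorial_ne_zero _
      field_simp
      ring
    show HasSum (fun n : ℕ => ((Nat.factorial (2 * (n + 1)) : ℂ))⁻¹ • ((β : ℂ) • P) ^ (2 * (n + 1))) _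
    rw [hfun]
    convert hc2 using 1
    simp
  have hoddSum : HasSum
      (fun k : ℕ => ((Nat.factorial (2 * k + 1) : ℂ))⁻¹ • ((β : ℂ) • P) ^ (2 * k + 1))
      (Complex.sin β • P) := by
    have hsin := (Complex.hasSum_sin (β : ℂ)).smul_const P
    have hfun : (fun n : ℕ => ((Nat.factorial (2 * n + 1) : ℂ))⁻¹ • ((β : ℂ) • P) ^ (2 * n + 1))
        = fun n : ℕ => ((-1 : ℂ) ^ n * (β : ℂ) ^ (2 * n + 1) / (Nat.factorial (2 * n + 1) : ℂ)) • P := by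
      funext n
      rw [smul_pow, hodd n, smul_smul, smul_smul]
      congr 1
      have hfac : ((Nat.factorial (2 * n + 1) : ℂ)) ≠ 0 := by
        exact_mod_cast Nat.factorial_ne_zero _
      field_simp
    rw [hfun]
    exact hsin
  exact hevenSum.even_add_odd hoddSum

lemma Qdag_eq : Qdag = !![0, 0; 1, 0] := by
  ext i j
  fin_cases i <;> fin_cases j <;>
    norm_num [Qdag, X, Y, Complex.I_mul_I]

lemma Qann_eq : Qann = !![0, 1; 0, 0] := by
  ext i j
  fin_cases i <;> fin_cases j <;>
    norm_num [Qann, X, Y, Complex.I_mul_I]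

lemma Pm_eq : Pm A3 B3 C3 =
    (!![0, 0; 1, 0] : Matrix (Fin 2) (Fin 2) ℂ) ⊗ₖ ((!![0, 1; 0, 0] : Matrix (Fin 2) (Fin 2) ℂ) ⊗ₖ !![0, 1; 0, 0])
      - (!![0, 1; 0, 0] : Matrix (Fin 2) (Fin 2) ℂ) ⊗ₖ ((!![0, 0; 1, 0] : Matrix (Fin 2) (Fin 2) ℂ) ⊗ₖ !![0, 0; 1, 0]) := by
  rw [Pm, ← Qdag_eq, ← Qann_eq]
  congr 1 <;> simp [A3, B3, C3, ← Matrix.mul_kronecker_mul]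

lemma mul1 : (!![0, 0; 1, 0] : Matrix (Fin 2) (Fin 2) ℂ) * !![0, 0; 1, 0] = 0 := by
  ext i j; fin_cases i <;> fin_cases j <;> norm_num [Matrix.mul_apply, Fin.sum_univ_two]
lemma mul2 : (!![0, 1; 0, 0] : Matrix (Fin 2) (Fin 2) ℂ) * !![0, 1; 0, 0] = 0 := by
  ext i j; fin_cases i <;> fin_cases j <;> norm_num [Matrix.mul_apply, Fin.sum_univ_two]
lemma mul3 : (!![0, 0; 1, 0] : Matrix (Fin 2) (Fin 2) ℂ) * !![0, 1; 0, 0] = !![0, 0; 0, 1] := by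
  ext i j; fin_cases i <;> fin_cases j <;> norm_num [Matrix.mul_apply, Fin.sum_univ_two]
lemma mul4 : (!![0, 1; 0, 0] : Matrix (Fin 2) (Fin 2) ℂ) * !![0, 0; 1, 0] = !![1, 0; 0, 0] := by
  ext i j; fin_cases i <;> fin_cases j <;> norm_num [Matrix.mul_apply, Fin.sum_univ_two]
lemma mul5 : (!![0, 0; 0, 1] : Matrix (Fin 2) (Fin 2) ℂ) * !![0, 0; 1, 0] = !![0, 0; 1, 0] := by
  ext i j; fin_cases i <;> fin_cases j <;> norm_num [Matrix.mul_apply, Fin.sum_univ_two]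
lemma mul6 : (!![1, 0; 0, 0] : Matrix (Fin 2) (Fin 2) ℂ) * !![0, 1; 0, 0] = !![0, 1; 0, 0] := by
  ext i j; fin_cases i <;> fin_cases j <;> norm_num [Matrix.mul_apply, Fin.sum_univ_two]
lemma mul7 : (!![1, 0; 0, 0] : Matrix (Fin 2) (Fin 2) ℂ) * !![0, 0; 1, 0] = 0 := by
  ext i j; fin_cases i <;> fin_cases j <;> norm_num [Matrix.mul_apply, Fin.sum_univ_two]
lemma mul8 : (!![0, 0; 0, 1] : Matrix (Fin 2) (Fin 2) ℂ) * !![0, 1; 0, 0] = 0 := by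
  ext i j; fin_cases i <;> fin_cases j <;> norm_num [Matrix.mul_apply, Fin.sum_univ_two]

lemma Pm_sq_kron : Pm A3 B3 C3 ^ 2 =
    -((!![0, 0; 0, 1] : Matrix (Fin 2) (Fin 2) ℂ) ⊗ₖ ((!![1, 0; 0, 0] : Matrix (Fin 2) (Fin 2) ℂ) ⊗ₖ !![1, 0; 0, 0]))
      - (!![1, 0; 0, 0] : Matrix (Fin 2) (Fin 2) ℂ) ⊗ₖ ((!![0, 0; 0, 1] : Matrix (Fin 2) (Fin 2) ℂ) ⊗ₖ !![0, 0; 0, 1]) := by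
  rw [pow_two, Pm_eq, sub_mul, mul_sub, mul_sub]
  simp only [← Matrix.mul_kronecker_mul, mul1, mul2, mul3, mul4,
    Matrix.zero_kronecker, Matrix.kronecker_zero]
  abel

lemma Pm_cube : Pm A3 B3 C3 ^ 3 = -(Pm A3 B3 C3) := by
  rw [pow_succ, Pm_sq_kron, Pm_eq, sub_mul, mul_sub, mul_sub, neg_mul, neg_mul]
  simp only [← Matrix.mul_kronecker_mul, mul5, mul6, mul7, mul8,
    Matrix.zero_kronecker, Matrix.kronecker_zero]
  abel

lemma Pm_sq : Pm A3 B3 C3 ^ 2 =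
    (1/4 : ℂ) • (A3 Z * B3 Z + A3 Z * C3 Z - B3 Z * C3 Z) - (1/4 : ℂ) • 1 := by
  have hZA : A3 Z * B3 Z = Z ⊗ₖ (Z ⊗ₖ (1 : Matrix (Fin 2) (Fin 2) ℂ)) := by
    simp [A3, B3, ← Matrix.mul_kronecker_mul]
  have hZB : A3 Z * C3 Z = Z ⊗ₖ ((1 : Matrix (Fin 2) (Fin 2) ℂ) ⊗ₖ Z) := by
    simp [A3, C3, ← Matrix.mul_kronecker_mul]
  have hZC : B3 Z * C3 Z = (1 : Matrix (Fin 2) (Fin 2) ℂ) ⊗ₖ (Z ⊗ₖ Z) := by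
    simp [B3, C3, ← Matrix.mul_kronecker_mul]
  have hone : (1 : Matrix (Fin 2 × Fin 2 × Fin 2) (Fin 2 × Fin 2 × Fin 2) ℂ) =
      (1 : Matrix (Fin 2) (Fin 2) ℂ) ⊗ₖ ((1 : Matrix (Fin 2) (Fin 2) ℂ) ⊗ₖ (1 : Matrix (Fin 2) (Fin 2) ℂ)) := by
    simp [Matrix.one_kronecker_one]
  have hZsplit : Z = (!![1, 0; 0, 0] : Matrix (Fin 2) (Fin 2) ℂ) + (-1 : ℂ) • !![0, 0; 0, 1] := by
    ext i j; fin_cases i <;> fin_cases j <;> simp [Z]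
  have honesplit : (1 : Matrix (Fin 2) (Fin 2) ℂ) =
      (!![1, 0; 0, 0] : Matrix (Fin 2) (Fin 2) ℂ) + !![0, 0; 0, 1] := by
    ext i j; fin_cases i <;> fin_cases j <;> simp
  rw [Pm_sq_kron, hZA, hZB, hZC, hone, hZsplit, honesplit]
  simp only [Matrix.add_kronecker, Matrix.kronecker_add, Matrix.smul_kronecker,
    Matrix.kronecker_smul]
  module

end AuxLemmas

/-- **Exponential of the three-qubit excitation generator.** For every real `β`,
`exp(β P⁻_{ABC}) = (1/4)(3 + cos β)·𝟙 + (1/2)sin²(β/2)·(Z_A Z_B + Z_A Z_C − Z_B Z_C)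
+ sin(β)·P⁻_{ABC}`. -/
theorem exp_three_qubit_excitation (β : ℝ) :
    NormedSpace.exp ((β : ℂ) • Pm A3 B3 C3) =
      ((1/4 : ℂ) * (3 + (Real.cos β : ℂ))) •
          (1 : Matrix (Fin 2 × Fin 2 × Fin 2) (Fin 2 × Fin 2 × Fin 2) ℂ)
        + ((1/2 : ℂ) * (Real.sin (β/2) : ℂ)^2) • (A3 Z * B3 Z + A3 Z * C3 Z - B3 Z * C3 Z)
        + (Real.sin β : ℂ) • Pm A3 B3 C3 := by
  rw [exp_cube_neg_self (Pm A3 B3 C3) Pm_cube β, Pm_sq,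
    ← Complex.ofReal_cos, ← Complex.ofReal_sin]
  have hhalf : (Real.sin (β/2) : ℂ) ^ 2 = 1/2 - (Real.cos β : ℂ)/2 := by
    have h := Real.sin_sq_eq_half_sub (β/2)
    rw [mul_div_cancel₀ β (two_ne_zero)] at h
    rw [← Complex.ofReal_pow, h]
    push_cast
    ring
  rw [hhalf]
  module

end PaperQAOA
end
end

section
/- On four qubits A, B, C, D, the mixed products of two- and three-qubit excitations with one overlapping qubit (the third index) satisfy: S^-_{CD} P^-_{ABC} = (1/2)(P^+_{ABD} − Z_C P^-_{ABD}); P^-_{ABC} S^-_{CD} = (1/2)(P^+_{ABD} + Z_C P^-_{ABD}); P^+_{ABC} S^+_{CD} = P^-_{ABC} S^-_{CD}; and S^-_{CD} P^-_{ABC} S^-_{CD} = 0. -/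
open Matrix Complex
open scoped Kronecker

noncomputable section
namespace PaperQAOA

private lemma sub_kronecker' {l m n p : Type} (A B : Matrix l m ℂ) (C : Matrix n p ℂ) :
    (A - B) ⊗ₖ C = A ⊗ₖ C - B ⊗ₖ C := by
  rw [sub_eq_add_neg, Matrix.add_kronecker, ← neg_one_smul ℂ B, Matrix.smul_kronecker,
    neg_one_smul, sub_eq_add_neg]

private lemma kronecker_sub' {l m n p : Type} (A : Matrix l m ℂ) (B C : Matrix n p ℂ) :
    A ⊗ₖ (B - C) = A ⊗ₖ B - A ⊗ₖ C := by
  rw [sub_eq_add_neg, Matrix.kronecker_add, ← neg_one_smul ℂ C, Matrix.kronecker_smul,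
    neg_one_smul, sub_eq_add_neg]


private lemma neg_kronecker' {l m n p : Type} (A : Matrix l m ℂ) (C : Matrix n p ℂ) :
    (-A) ⊗ₖ C = -(A ⊗ₖ C) := by
  rw [← neg_one_smul ℂ A, Matrix.smul_kronecker, neg_one_smul]

private lemma kronecker_neg' {l m n p : Type} (A : Matrix l m ℂ) (C : Matrix n p ℂ) :
    A ⊗ₖ (-C) = -(A ⊗ₖ C) := by
  rw [← neg_one_smul ℂ C, Matrix.kronecker_smul, neg_one_smul]

private lemma quad_mul (M N P R M' N' P' R' : Matrix (Fin 2) (Fin 2) ℂ) :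
    (M ⊗ₖ (N ⊗ₖ (P ⊗ₖ R))) * (M' ⊗ₖ (N' ⊗ₖ (P' ⊗ₖ R'))) =
    (M * M') ⊗ₖ ((N * N') ⊗ₖ ((P * P') ⊗ₖ (R * R'))) := by
  simp [← Matrix.mul_kronecker_mul]

private lemma A4_quad (M : Matrix (Fin 2) (Fin 2) ℂ) :
    A4 M = M ⊗ₖ ((1 : Matrix (Fin 2) (Fin 2) ℂ) ⊗ₖ
      ((1 : Matrix (Fin 2) (Fin 2) ℂ) ⊗ₖ (1 : Matrix (Fin 2) (Fin 2) ℂ))) := by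
  rw [A4, Matrix.one_kronecker_one, Matrix.one_kronecker_one]

private lemma B4_quad (M : Matrix (Fin 2) (Fin 2) ℂ) :
    B4 M = (1 : Matrix (Fin 2) (Fin 2) ℂ) ⊗ₖ (M ⊗ₖ
      ((1 : Matrix (Fin 2) (Fin 2) ℂ) ⊗ₖ (1 : Matrix (Fin 2) (Fin 2) ℂ))) := by
  rw [B4, Matrix.one_kronecker_one]

private lemma Qd_mul_Qd : Qdag * Qdag = 0 := by
  ext i j
  fin_cases i <;> fin_cases j <;>
    simp [Qdag, X, Y, Matrix.mul_apply, Fin.sum_univ_two] <;> ring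

private lemma Qa_mul_Qa : Qann * Qann = 0 := by
  ext i j
  fin_cases i <;> fin_cases j <;>
    simp [Qann, X, Y, Matrix.mul_apply, Fin.sum_univ_two] <;> ring

private lemma Qd_mul_Qa : Qdag * Qann = (1/2 : ℂ) • (1 - Z) := by
  ext i j
  fin_cases i <;> fin_cases j <;>
    simp [Qdag, Qann, X, Y, Z, Matrix.mul_apply, Fin.sum_univ_two, Matrix.one_apply] <;> ring_nf <;>
    simp [Complex.I_sq] <;> ring

private lemma Qa_mul_Qd : Qann * Qdag = (1/2 : ℂ) • (1 + Z) := by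
  ext i j
  fin_cases i <;> fin_cases j <;>
    simp [Qdag, Qann, X, Y, Z, Matrix.mul_apply, Fin.sum_univ_two, Matrix.one_apply] <;> ring_nf <;>
    simp [Complex.I_sq] <;> ring

private lemma Z_mul_Qd : Z * Qdag = -Qdag := by
  ext i j
  fin_cases i <;> fin_cases j <;>
    simp [Qdag, X, Y, Z, Matrix.mul_apply, Fin.sum_univ_two] <;> ring

private lemma Z_mul_Qa : Z * Qann = Qann := by
  ext i j
  fin_cases i <;> fin_cases j <;>
    simp [Qann, X, Y, Z, Matrix.mul_apply, Fin.sum_univ_two] <;> ring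

private lemma Sm_CD_quad :
    Sm C4 D4 = (1 : Matrix (Fin 2) (Fin 2) ℂ) ⊗ₖ ((1 : Matrix (Fin 2) (Fin 2) ℂ) ⊗ₖ
      (Qdag ⊗ₖ Qann)) - (1 : Matrix (Fin 2) (Fin 2) ℂ) ⊗ₖ
      ((1 : Matrix (Fin 2) (Fin 2) ℂ) ⊗ₖ (Qann ⊗ₖ Qdag)) := by
  simp [Sm, C4, D4, ← Matrix.mul_kronecker_mul]

private lemma Sp_CD_quad :
    Sp C4 D4 = (1 : Matrix (Fin 2) (Fin 2) ℂ) ⊗ₖ ((1 : Matrix (Fin 2) (Fin 2) ℂ) ⊗ₖ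
      (Qdag ⊗ₖ Qann)) + (1 : Matrix (Fin 2) (Fin 2) ℂ) ⊗ₖ
      ((1 : Matrix (Fin 2) (Fin 2) ℂ) ⊗ₖ (Qann ⊗ₖ Qdag)) := by
  simp [Sp, C4, D4, ← Matrix.mul_kronecker_mul]

private lemma Pm_ABC_quad :
    Pm A4 B4 C4 = Qdag ⊗ₖ (Qann ⊗ₖ (Qann ⊗ₖ (1 : Matrix (Fin 2) (Fin 2) ℂ))) -
      Qann ⊗ₖ (Qdag ⊗ₖ (Qdag ⊗ₖ (1 : Matrix (Fin 2) (Fin 2) ℂ))) := by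
  simp [Pm, A4, B4, C4, ← Matrix.mul_kronecker_mul]

private lemma Pp_ABC_quad :
    Pp A4 B4 C4 = Qdag ⊗ₖ (Qann ⊗ₖ (Qann ⊗ₖ (1 : Matrix (Fin 2) (Fin 2) ℂ))) +
      Qann ⊗ₖ (Qdag ⊗ₖ (Qdag ⊗ₖ (1 : Matrix (Fin 2) (Fin 2) ℂ))) := by
  simp [Pp, A4, B4, C4, ← Matrix.mul_kronecker_mul]

private lemma Pm_ABD_quad :
    Pm A4 B4 D4 = Qdag ⊗ₖ (Qann ⊗ₖ ((1 : Matrix (Fin 2) (Fin 2) ℂ) ⊗ₖ Qann)) -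
      Qann ⊗ₖ (Qdag ⊗ₖ ((1 : Matrix (Fin 2) (Fin 2) ℂ) ⊗ₖ Qdag)) := by
  simp [Pm, A4, B4, D4, ← Matrix.mul_kronecker_mul]

private lemma Pp_ABD_quad :
    Pp A4 B4 D4 = Qdag ⊗ₖ (Qann ⊗ₖ ((1 : Matrix (Fin 2) (Fin 2) ℂ) ⊗ₖ Qann)) +
      Qann ⊗ₖ (Qdag ⊗ₖ ((1 : Matrix (Fin 2) (Fin 2) ℂ) ⊗ₖ Qdag)) := by
  simp [Pp, A4, B4, D4, ← Matrix.mul_kronecker_mul]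

/-- **Mixed products of two- and three-qubit excitations overlapping on the third index.**
`S⁻_{CD}P⁻_{ABC} = (1/2)(P⁺_{ABD} − Z_C P⁻_{ABD})`;
`P⁻_{ABC}S⁻_{CD} = (1/2)(P⁺_{ABD} + Z_C P⁻_{ABD})`;
`P⁺_{ABC}S⁺_{CD} = P⁻_{ABC}S⁻_{CD}`; and `S⁻_{CD}P⁻_{ABC}S⁻_{CD} = 0`. -/
theorem mixed_excitation_products_third_index :
    Sm C4 D4 * Pm A4 B4 C4 = (1/2 : ℂ) • (Pp A4 B4 D4 - C4 Z * Pm A4 B4 D4) ∧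
    Pm A4 B4 C4 * Sm C4 D4 = (1/2 : ℂ) • (Pp A4 B4 D4 + C4 Z * Pm A4 B4 D4) ∧
    Pp A4 B4 C4 * Sp C4 D4 = Pm A4 B4 C4 * Sm C4 D4 ∧
    Sm C4 D4 * Pm A4 B4 C4 * Sm C4 D4 = 0 := by
  have hCZ : C4 Z = (1 : Matrix (Fin 2) (Fin 2) ℂ) ⊗ₖ ((1 : Matrix (Fin 2) (Fin 2) ℂ) ⊗ₖ
      (Z ⊗ₖ (1 : Matrix (Fin 2) (Fin 2) ℂ))) := rfl
  refine ⟨?_, ?_, ?_, ?_⟩ <;>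
  · simp only [Sm_CD_quad, Sp_CD_quad, Pm_ABC_quad, Pp_ABC_quad, Pm_ABD_quad, Pp_ABD_quad,
      hCZ, sub_mul, mul_sub, add_mul, mul_add, quad_mul, Qd_mul_Qd, Qa_mul_Qa, Qd_mul_Qa,
      Qa_mul_Qd, Z_mul_Qd, Z_mul_Qa, one_mul, mul_one, Matrix.zero_kronecker,
      Matrix.kronecker_zero, Matrix.smul_kronecker, Matrix.kronecker_smul,
      kronecker_sub', sub_kronecker', neg_kronecker', kronecker_neg', smul_neg, neg_smul, sub_neg_eq_add, Matrix.kronecker_add, Matrix.add_kronecker,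
      Matrix.one_kronecker_one, smul_sub, smul_add, smul_smul, mul_zero, zero_mul,
      Matrix.mul_smul, Matrix.smul_mul, neg_mul, mul_neg]
    module

end PaperQAOA
end
end
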